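/- For all integers 0 ≤ r ≤ s ≤ k, the identity (Σ_{n≥0} G_n^{(k)}(r→s) x^n) · p̂_{k+1}^{(0)}(x) = x^{s−r} · p̂_r^{(0)}(x) · p̂_{k−s}^{(s+1)}(x) holds in R⟦x⟧; and for all integers 0 ≤ s ≤ r ≤ k, (Σ_{n≥0} G_n^{(k)}(r→s) x^n) · p̂_{k+1}^{(0)}(x) = x^{r−s} · (B_{s+1} B_{s+2} ⋯ B_r) · p̂_s^{(0)}(x) · p̂_{k−r}^{(r+1)}(x). -/

import Mathlib

/-!
Splitting off the first step of a path shows that the generating functions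
`F_r = Σ_n G_n^{(k)}(r→s) x^n`, `0 ≤ r ≤ k`, solve the linear system
`F_r = δ_{rs} + x (F_{r+1} + B_r F_{r-1})` (terms with index outside `[0, k]` omitted), and such a
system has a unique solution in `R⟦x⟧` because it determines the coefficients degree by degree.
So it suffices that the claimed numerators `N_r` satisfy
`N_r = δ_{rs} p̂_{k+1} + x (N_{r+1} + B_r N_{r-1})`.
Away from the diagonal this is the three-term recurrence of `p̂` (read from the bottom for `r < s`
and from the top for `r > s`); on the diagonal it is the continuant splitting formula
`p̂_{a+b+2} = p̂_{a+1} p̂^{(a+1)}_{b+1} - B_{a+1} x² p̂_a p̂^{(a+2)}_b`.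
-/

variable {R : Type*} [CommRing R]

/-- The `B`-weight of a bounded up-down path: each down-step from height `h` to
height `h−1` contributes a factor `B h`, up-steps contribute `1`. -/
def pathBWeight (B : ℕ → R) {k n : ℕ} (h : Fin (n + 1) → Fin (k + 1)) : R :=
  ∏ i : Fin n,
    if (h i.succ : ℕ) + 1 = (h i.castSucc : ℕ) then B (h i.castSucc : ℕ) else 1

open scoped Classical in
/-- `GpathB B k n r s` is the sum of the `B`-weights of all up-down paths
`(h_0,…,h_n)` with `h_0 = r`, `h_n = s`, `0 ≤ h_i ≤ k` and `|h_{i+1} − h_i| = 1`. -/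
noncomputable def GpathB (B : ℕ → R) (k n r s : ℕ) : R :=
  ∑ h : {h : Fin (n + 1) → Fin (k + 1) //
      (h 0 : ℕ) = r ∧ (h (Fin.last n) : ℕ) = s ∧
      ∀ i : Fin n, (h i.succ : ℕ) + 1 = (h i.castSucc : ℕ) ∨
        (h i.castSucc : ℕ) + 1 = (h i.succ : ℕ)},
    pathBWeight B h.1

/-- `phat B t m` is the polynomial `p̂_m^{(t)}(x) = x^m P_m(1/x)` with every
coefficient `B_i` replaced by `B_{i+t}`: it satisfies `p̂_0 = p̂_1 = 1` and
`p̂_{m+1} = p̂_m − B_{m+t} x² p̂_{m−1}` for `m ≥ 1`. -/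
noncomputable def phat (B : ℕ → R) (t : ℕ) : ℕ → Polynomial R
  | 0 => 1
  | 1 => 1
  | m + 2 => phat B t (m + 1) - Polynomial.C (B (m + 1 + t)) * Polynomial.X ^ 2 * phat B t m


namespace PowerSeries

theorem eq_of_forall_eq_add_X_mul_sum {S ι : Type*} [Semiring S] (s : Finset ι)
    (c : ι → ι → S) (v : ι → S⟦X⟧) {F G : ι → S⟦X⟧}
    (hF : ∀ i ∈ s, F i = v i + X * ∑ j ∈ s, c i j • F j)
    (hG : ∀ i ∈ s, G i = v i + X * ∑ j ∈ s, c i j • G j) :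
    ∀ i ∈ s, F i = G i := by
  suffices ∀ n, ∀ i ∈ s, coeff n (F i) = coeff n (G i) from
    fun i hi => ext fun n => this n i hi
  intro n
  induction n with
  | zero => intro i hi; simp [hF i hi, hG i hi]
  | succ n ih =>
    intro i hi
    rw [hF i hi, hG i hi, map_add, map_add, coeff_succ_X_mul, coeff_succ_X_mul, map_sum, map_sum]
    congr 1
    exact Finset.sum_congr rfl fun j hj => by rw [coeff_smul, coeff_smul, ih j hj]

end PowerSeries

-- The transfer matrix of bounded up-down paths, see `GpathB_succ`.
def stepWeight {S : Type*} [Semiring S] (B : ℕ → S) (a b : ℕ) : S :=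
  if b + 1 = a then B a else if a + 1 = b then 1 else 0

theorem stepWeight_eq_ite {S : Type*} [Semiring S] (B : ℕ → S) (a b : ℕ) :
    stepWeight B a b =
      if b + 1 = a ∨ a + 1 = b then (if b + 1 = a then B a else 1) else 0 := by
  unfold stepWeight
  split_ifs <;> first | rfl | omega

theorem sum_range_stepWeight_smul {S M : Type*} [Semiring S] [AddCommMonoid M] [Module S M]
    (B : ℕ → S) (f : ℕ → M) {k r : ℕ} (hr : r ≤ k) :
    ∑ b ∈ Finset.range (k + 1), stepWeight B r b • f b =
      (if r + 1 ≤ k then f (r + 1) else 0) + (if 0 < r then B r • f (r - 1) else 0) := by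
  have hstep : ∀ b, stepWeight B r b • f b =
      (if r + 1 = b then f b else 0) +
        if 0 < r then (if r - 1 = b then B r • f b else 0) else 0 := by
    intro b
    unfold stepWeight
    split_ifs <;> first | omega | simp
  simp only [hstep, Finset.sum_add_distrib, ← Finset.ite_sum_zero, Finset.sum_ite_eq,
    Finset.mem_range, Nat.lt_succ_iff, (Nat.sub_le r 1).trans hr, if_true]

theorem GpathB_eq_sum_prod_stepWeight (B : ℕ → R) (k n r s : ℕ) :
    GpathB B k n r s = ∑ h : Fin (n + 1) → Fin (k + 1),
      if (h 0 : ℕ) = r ∧ (h (Fin.last n) : ℕ) = s then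
        ∏ i : Fin n, stepWeight B (h i.castSucc) (h i.succ) else 0 := by
  classical
  rw [GpathB, ← Finset.sum_subtype _ (fun h => Finset.mem_filter_univ h) (pathBWeight B),
    Finset.sum_filter]
  refine Finset.sum_congr rfl fun h _ => ?_
  -- `stepWeight` vanishes off the steps, so the product also checks the path condition
  simp only [stepWeight_eq_ite, Fintype.prod_ite_zero, pathBWeight]
  split_ifs <;> tauto

theorem GpathB_succ (B : ℕ → R) (k n r s : ℕ) (hr : r ≤ k) :
    GpathB B k (n + 1) r s =
      ∑ b ∈ Finset.range (k + 1), stepWeight B r b * GpathB B k n b s := by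
  classical
  simp only [GpathB_eq_sum_prod_stepWeight, Finset.sum_range, Finset.mul_sum]
  -- a path of length `n + 1` is its first height followed by a path of length `n`
  rw [← (Fin.consEquiv fun _ => Fin (k + 1)).sum_comp, Fintype.sum_prod_type, Finset.sum_comm]
  conv_rhs => rw [Finset.sum_comm]
  refine Finset.sum_congr rfl fun h _ => ?_
  simp only [Fin.consEquiv_apply, Fin.cons_zero, Fin.prod_univ_succ, Fin.castSucc_zero,
    Fin.cons_succ, ← Fin.succ_castSucc, ← Fin.succ_last]
  rw [Finset.sum_eq_single_of_mem ⟨r, by omega⟩ (Finset.mem_univ _)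
      fun a _ ha => if_neg fun h => ha (Fin.ext h.1),
    Finset.sum_eq_single_of_mem (h 0) (Finset.mem_univ _)
      fun b _ hb => by rw [if_neg fun h => hb (Fin.ext h.1.symm), mul_zero]]
  simp only [true_and, mul_ite, mul_zero]

theorem GpathB_zero (B : ℕ → R) (k r s : ℕ) (hr : r ≤ k) :
    GpathB B k 0 r s = if r = s then 1 else 0 := by
  rw [GpathB_eq_sum_prod_stepWeight, ← (Equiv.funUnique (Fin 1) (Fin (k + 1))).symm.sum_comp,
    Finset.sum_eq_single_of_mem ⟨r, by omega⟩ (Finset.mem_univ _)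
      fun a _ ha => if_neg fun h => ha (Fin.ext h.1)]
  simp

theorem mk_GpathB (B : ℕ → R) (k r s : ℕ) (hr : r ≤ k) :
    PowerSeries.mk (fun n => GpathB B k n r s) = (if r = s then 1 else 0) +
      PowerSeries.X * ∑ b ∈ Finset.range (k + 1),
        stepWeight B r b • PowerSeries.mk (fun n => GpathB B k n b s) := by
  ext (_ | n)
  · rw [PowerSeries.coeff_mk, GpathB_zero B k r s hr]
    split_ifs <;> simp
  · rw [PowerSeries.coeff_mk, GpathB_succ B k n r s hr]
    split_ifs <;> simp [PowerSeries.coeff_succ_X_mul, PowerSeries.coeff_one, map_sum]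

open Polynomial

@[simp] theorem phat_zero (B : ℕ → R) (t : ℕ) : phat B t 0 = 1 := rfl

@[simp] theorem phat_one (B : ℕ → R) (t : ℕ) : phat B t 1 = 1 := rfl

theorem phat_add_two (B : ℕ → R) (t m : ℕ) :
    phat B t (m + 2) = phat B t (m + 1) - C (B (m + 1 + t)) * X ^ 2 * phat B t m := rfl

theorem phat_add_add_two (B : ℕ → R) (t a : ℕ) : ∀ b : ℕ,
    phat B t (a + b + 2) = phat B t (a + 1) * phat B (a + 1 + t) (b + 1)
      - C (B (a + 1 + t)) * X ^ 2 * phat B t a * phat B (a + 2 + t) b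
  | 0 => by simp [phat_add_two]
  | 1 => by
    simp only [phat_add_two, phat_one, phat_zero, zero_add]
    rw [show 1 + (a + 1 + t) = a + 1 + 1 + t by omega]
    ring
  | b + 2 => by
    rw [show a + (b + 2) + 2 = a + b + 2 + 2 by omega, phat_add_two,
      show a + b + 2 + 1 = a + (b + 1) + 2 by omega, phat_add_add_two B t a (b + 1),
      phat_add_add_two B t a b, phat_add_two B (a + 1 + t) (b + 1), phat_add_two B (a + 2 + t) b,
      show b + 1 + 1 + (a + 1 + t) = a + b + t + 3 by omega,
      show b + 1 + (a + 2 + t) = a + b + t + 3 by omega,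
      show a + (b + 1) + 2 + t = a + b + t + 3 by omega]
    ring

theorem phat_add_two_eq_shift (B : ℕ → R) (t m : ℕ) :
    phat B t (m + 2) = phat B (t + 1) (m + 1) - C (B (t + 1)) * X ^ 2 * phat B (t + 2) m := by
  simpa [add_comm] using phat_add_add_two B t 0 m

noncomputable def gfNumerator (B : ℕ → R) (k r s : ℕ) : R[X] :=
  if r ≤ s then X ^ (s - r) * phat B 0 r * phat B (s + 1) (k - s)
  else X ^ (r - s) * C (∏ i ∈ Finset.Icc (s + 1) r, B i) * phat B 0 s * phat B (r + 1) (k - r)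

theorem gfNumerator_of_le (B : ℕ → R) (k : ℕ) {r s : ℕ} (h : r ≤ s) :
    gfNumerator B k r s = X ^ (s - r) * phat B 0 r * phat B (s + 1) (k - s) :=
  if_pos h

theorem gfNumerator_of_ge (B : ℕ → R) (k : ℕ) {r s : ℕ} (h : s ≤ r) :
    gfNumerator B k r s =
      X ^ (r - s) * C (∏ i ∈ Finset.Icc (s + 1) r, B i) * phat B 0 s *
        phat B (r + 1) (k - r) := by
  rcases h.lt_or_eq with h | rfl
  · exact if_neg (Nat.not_le.mpr h)
  · simp [gfNumerator]

theorem gfNumerator_of_lt (B : ℕ → R) (k : ℕ) {r s : ℕ} (h : r < s) :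
    gfNumerator B k r s = X * (gfNumerator B k (r + 1) s +
      if 0 < r then B r • gfNumerator B k (r - 1) s else 0) := by
  obtain ⟨d, rfl⟩ : ∃ d, s = r + d + 1 := ⟨s - r - 1, by omega⟩
  rw [gfNumerator_of_le B k h.le, gfNumerator_of_le B k (by omega : r + 1 ≤ r + d + 1),
    show r + d + 1 - r = d + 1 by omega, show r + d + 1 - (r + 1) = d by omega]
  rcases r with _ | m
  · simp only [zero_add, phat_zero, phat_one, lt_irrefl, if_false]
    ring
  · rw [if_pos m.succ_pos, m.add_sub_cancel,
      gfNumerator_of_le B k (by omega : m ≤ m + 1 + d + 1),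
      show m + 1 + d + 1 - m = d + 2 by omega, phat_add_two, smul_eq_C_mul, add_zero]
    ring

theorem gfNumerator_self (B : ℕ → R) {k s : ℕ} (hs : s ≤ k) :
    gfNumerator B k s s = phat B 0 (k + 1) +
      X * ((if s + 1 ≤ k then gfNumerator B k (s + 1) s else 0) +
        if 0 < s then B s • gfNumerator B k (s - 1) s else 0) := by
  rw [gfNumerator_of_le B k le_rfl, Nat.sub_self, pow_zero, one_mul]
  rcases hs.eq_or_lt with rfl | hk
  · rw [if_neg (by omega), Nat.sub_self, phat_zero, mul_one, zero_add]
    rcases s with _ | m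
    · simp
    · rw [if_pos m.succ_pos, m.add_sub_cancel, gfNumerator_of_le B _ (m.le_add_right 1),
        Nat.add_sub_cancel_left, Nat.sub_self, phat_add_two, smul_eq_C_mul]
      simp only [add_zero, phat_zero, mul_one, pow_one]
      ring
  · obtain ⟨j, rfl⟩ : ∃ j, k = s + j + 1 := ⟨k - s - 1, by omega⟩
    rw [if_pos (by omega), gfNumerator_of_ge B _ (s.le_add_right 1), Nat.add_sub_cancel_left,
      Finset.Icc_self, Finset.prod_singleton, show s + j + 1 - (s + 1) = j by omega,
      show s + j + 1 - s = j + 1 by omega, phat_add_add_two]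
    simp only [add_zero, pow_one]
    rcases s with _ | m
    · simp only [zero_add, phat_zero, phat_one, lt_irrefl, if_false]
      ring
    · rw [if_pos m.succ_pos, m.add_sub_cancel, gfNumerator_of_le B _ (m.le_add_right 1),
        Nat.add_sub_cancel_left, show m + 1 + j + 1 - (m + 1) = j + 1 by omega, phat_add_two,
        smul_eq_C_mul]
      simp only [add_zero]
      ring

theorem gfNumerator_of_gt (B : ℕ → R) {k r s : ℕ} (hr : r ≤ k) (h : s < r) :
    gfNumerator B k r s = X * ((if r + 1 ≤ k then gfNumerator B k (r + 1) s else 0) +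
      B r • gfNumerator B k (r - 1) s) := by
  obtain ⟨d, rfl⟩ : ∃ d, r = s + d + 1 := ⟨r - s - 1, by omega⟩
  rw [gfNumerator_of_ge B k h.le, Nat.add_sub_cancel,
    gfNumerator_of_ge B k (by omega : s ≤ s + d),
    show s + d + 1 - s = d + 1 by omega, show s + d - s = d by omega, smul_eq_C_mul,
    Finset.prod_Icc_succ_top (by omega : s + 1 ≤ s + d + 1)]
  rcases hr.eq_or_lt with rfl | hk
  · rw [if_neg (by omega), Nat.sub_self, show s + d + 1 - (s + d) = 1 by omega]
    simp only [phat_zero, phat_one, map_mul]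
    ring
  · obtain ⟨j, rfl⟩ : ∃ j, k = s + d + 2 + j := ⟨k - s - d - 2, by omega⟩
    rw [if_pos (by omega), gfNumerator_of_ge B _ (by omega : s ≤ s + d + 1 + 1),
      Finset.prod_Icc_succ_top (by omega : s + 1 ≤ s + d + 1 + 1),
      Finset.prod_Icc_succ_top (by omega : s + 1 ≤ s + d + 1),
      show s + d + 2 + j - (s + d) = j + 2 by omega,
      show s + d + 2 + j - (s + d + 1) = j + 1 by omega,
      show s + d + 2 + j - (s + d + 1 + 1) = j by omega, show s + d + 1 + 1 - s = d + 2 by omega,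
      phat_add_two_eq_shift]
    simp only [map_mul]
    ring

theorem gfNumerator_eq (B : ℕ → R) {k r s : ℕ} (hr : r ≤ k) (hs : s ≤ k) :
    gfNumerator B k r s = (if r = s then phat B 0 (k + 1) else 0) +
      X * ∑ b ∈ Finset.range (k + 1), stepWeight B r b • gfNumerator B k b s := by
  rw [sum_range_stepWeight_smul B _ hr]
  rcases lt_trichotomy r s with h | rfl | h
  · rw [gfNumerator_of_lt B k h, if_neg h.ne, if_pos (show r + 1 ≤ k by omega), zero_add]
  · rw [gfNumerator_self B hs, if_pos rfl]
  · rw [gfNumerator_of_gt B hr h, if_neg h.ne', if_pos (show 0 < r by omega), zero_add]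

theorem mk_GpathB_mul_phat (B : ℕ → R) {k r s : ℕ} (hr : r ≤ k) (hs : s ≤ k) :
    PowerSeries.mk (fun n => GpathB B k n r s) * (phat B 0 (k + 1) : PowerSeries R) =
      (gfNumerator B k r s : PowerSeries R) := by
  refine PowerSeries.eq_of_forall_eq_add_X_mul_sum (Finset.range (k + 1)) (stepWeight B)
    (fun i => if i = s then (phat B 0 (k + 1) : PowerSeries R) else 0)
    (F := fun i =>
      PowerSeries.mk (fun n => GpathB B k n i s) * (phat B 0 (k + 1) : PowerSeries R))
    (G := fun i => (gfNumerator B k i s : PowerSeries R))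
    (fun i hi => ?_) (fun i hi => ?_) r (Finset.mem_range_succ_iff.2 hr)
  · rw [mk_GpathB B k i s (Finset.mem_range_succ_iff.1 hi), add_mul, mul_assoc, Finset.sum_mul]
    simp only [smul_mul_assoc, ite_mul, one_mul, zero_mul]
  · have h := congrArg coeToPowerSeries.ringHom
      (gfNumerator_eq B (Finset.mem_range_succ_iff.1 hi) hs)
    simpa only [map_add, map_mul, map_sum, apply_ite coeToPowerSeries.ringHom, map_zero,
      coeToPowerSeries.ringHom_apply, coe_smul, coe_X] using h

/-- Theorem 27: the weighted generating function identity
`(Σ_{n≥0} G_n^{(k)}(r→s) x^n) · p̂_{k+1}^{(0)}(x) = x^{s−r} p̂_r^{(0)}(x) p̂_{k−s}^{(s+1)}(x)`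
for `r ≤ s ≤ k`, and the symmetric identity (with factor `B_{s+1}⋯B_r`) for `s ≤ r ≤ k`. -/
theorem statement12 (B : ℕ → R) (k r s : ℕ) (hr : r ≤ k) (hs : s ≤ k) :
    (r ≤ s →
      (PowerSeries.mk fun n => GpathB B k n r s) * (phat B 0 (k + 1) : PowerSeries R)
        = PowerSeries.X ^ (s - r) * (phat B 0 r : PowerSeries R) *
            (phat B (s + 1) (k - s) : PowerSeries R)) ∧
    (s ≤ r →
      (PowerSeries.mk fun n => GpathB B k n r s) * (phat B 0 (k + 1) : PowerSeries R)
        = PowerSeries.X ^ (r - s) * PowerSeries.C (∏ i ∈ Finset.Icc (s + 1) r, B i) *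
            (phat B 0 s : PowerSeries R) * (phat B (r + 1) (k - r) : PowerSeries R)) := by
  rw [mk_GpathB_mul_phat B hr hs]
  exact ⟨fun h => by simp only [gfNumerator_of_le B k h, coe_mul, coe_pow, coe_X],
    fun h => by simp only [gfNumerator_of_ge B k h, coe_mul, coe_pow, coe_X, coe_C]⟩
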